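/- For n ≥ 2, the total number of ballotlike paths with n steps that contain no D step is 2^(n-1), and the total number of ballotlike paths with n steps that contain at least one D step is binom(2n-2, n-1) - 2^(n-2). -/
import Mathlib


inductive BStep : Type
  | U | D | Hu | Hd
deriving DecidableEq

def BStep.h : BStep → ℤ
  | .U => 1
  | .D => -1
  | .Hu => 0
  | .Hd => 0

/-- The height reached by a path (list of steps). -/
def hsum (p : List BStep) : ℤ := (p.map BStep.h).sum

/-- The path never goes below the x-axis. -/
def NonNegPath (p : List BStep) : Prop := ∀ k : ℕ, 0 ≤ hsum (p.take k)

/-- Restriction (1): no umber horizontal step occurs at height zero. -/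
def Res1 (p : List BStep) : Prop :=
  ∀ (i : ℕ) (hi : i < p.length), p.get ⟨i, hi⟩ = BStep.Hu → 0 < hsum (p.take i)

/-- Restriction (2): no denim horizontal step occurs before the first down step. -/
def Res2 (p : List BStep) : Prop :=
  ∀ (i : ℕ) (hi : i < p.length), p.get ⟨i, hi⟩ = BStep.Hd →
    ∃ (j : ℕ) (hj : j < p.length), j < i ∧ p.get ⟨j, hj⟩ = BStep.D

/-- A bicolored Motzkin path of length `n`: from (0,0) to (n,0), never below the x-axis. -/
def IsBMotzkin (n : ℕ) (p : List BStep) : Prop :=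
  p.length = n ∧ hsum p = 0 ∧ NonNegPath p

/-- A ballotlike path: stays weakly above the x-axis, umber horizontal steps
never at height zero, denim horizontal steps never before the first down step. -/
def Ballotlike (p : List BStep) : Prop := NonNegPath p ∧ Res1 p ∧ Res2 p

/-- Binomial coefficient for integer arguments; zero for negative/out-of-range arguments. -/
def zchoose (m j : ℤ) : ℤ :=
  if 0 ≤ m ∧ 0 ≤ j then (Nat.choose m.toNat j.toNat : ℤ) else 0

/-- `eCount n i` : ballotlike paths from (0,0) to (n,i) with no down step. -/
noncomputable def eCount (n i : ℕ) : ℕ :=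
  Nat.card {p : List BStep // p.length = n ∧ Ballotlike p ∧ hsum p = (i : ℤ) ∧ BStep.D ∉ p}

/-- `fCount n i` : ballotlike paths from (0,0) to (n,i) with at least one down step. -/
noncomputable def fCount (n i : ℕ) : ℕ :=
  Nat.card {p : List BStep // p.length = n ∧ Ballotlike p ∧ hsum p = (i : ℤ) ∧ BStep.D ∈ p}


-- basics
lemma hsum_append (q : List BStep) (s : BStep) : hsum (q ++ [s]) = hsum q + s.h := by
  simp [hsum]

lemma take_append_le {q : List BStep} {s : BStep} {k : ℕ} (h : k ≤ q.length) :
    (q ++ [s]).take k = q.take k := by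
  rw [List.take_append_of_le_length h]

lemma hsum_nonneg_of (h : NonNegPath q) : 0 ≤ hsum q := by
  have := h q.length
  rwa [List.take_length] at this

lemma nonneg_append_iff (q : List BStep) (s : BStep) :
    NonNegPath (q ++ [s]) ↔ NonNegPath q ∧ 0 ≤ hsum q + s.h := by
  constructor
  · intro h
    refine ⟨fun k => ?_, ?_⟩
    · rcases le_or_gt k q.length with hk | hk
      · have := h k; rwa [take_append_le hk] at this
      · rw [List.take_of_length_le (le_of_lt hk)]
        have := h q.length
        rwa [take_append_le le_rfl, List.take_length] at this
    · have := h (q.length + 1)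
      rw [List.take_of_length_le (by simp)] at this
      rwa [hsum_append] at this
  · rintro ⟨h1, h2⟩ k
    rcases le_or_gt k q.length with hk | hk
    · rw [take_append_le hk]; exact h1 k
    · rw [List.take_of_length_le (by simp; omega), hsum_append]; exact h2

lemma mem_iff_get (s : BStep) (q : List BStep) : s ∈ q ↔ ∃ (j : ℕ) (hj : j < q.length), q.get ⟨j, hj⟩ = s := by
  rw [List.mem_iff_get]
  constructor
  · rintro ⟨⟨j, hj⟩, h⟩; exact ⟨j, hj, h⟩
  · rintro ⟨j, hj, h⟩; exact ⟨⟨j, hj⟩, h⟩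

lemma res1_append_iff (q : List BStep) (s : BStep) :
    Res1 (q ++ [s]) ↔ Res1 q ∧ (s = BStep.Hu → 0 < hsum q) := by
  constructor
  · intro h
    refine ⟨fun i hi hget => ?_, fun hs => ?_⟩
    · have hi' : i < (q ++ [s]).length := by simp; omega
      have hg : (q ++ [s]).get ⟨i, hi'⟩ = q.get ⟨i, hi⟩ := by
        simp [List.get_eq_getElem, List.getElem_append_left hi]
      have := h i hi' (by rw [hg]; exact hget)
      rwa [take_append_le (le_of_lt hi)] at this
    · have hi' : q.length < (q ++ [s]).length := by simp
      have hg : (q ++ [s]).get ⟨q.length, hi'⟩ = s := by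
        simp [List.get_eq_getElem]
      have := h q.length hi' (by rw [hg, hs])
      rwa [take_append_le le_rfl, List.take_length] at this
  · rintro ⟨h1, h2⟩ i hi hget
    rcases lt_or_ge i q.length with hk | hk
    · have hg : (q ++ [s]).get ⟨i, hi⟩ = q.get ⟨i, hk⟩ := by
        simp [List.get_eq_getElem, List.getElem_append_left hk]
      rw [take_append_le (le_of_lt hk)]
      exact h1 i hk (hg ▸ hget)
    · have hil : i = q.length := by simp at hi; omega
      subst hil
      have hg : (q ++ [s]).get ⟨q.length, hi⟩ = s := by simp [List.get_eq_getElem]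
      rw [take_append_le le_rfl, List.take_length]
      exact h2 (by rw [← hg, hget])

lemma res2_append_iff (q : List BStep) (s : BStep) :
    Res2 (q ++ [s]) ↔ Res2 q ∧ (s = BStep.Hd → BStep.D ∈ q) := by
  constructor
  · intro h
    refine ⟨fun i hi hget => ?_, fun hs => ?_⟩
    · have hi' : i < (q ++ [s]).length := by simp; omega
      have hg : (q ++ [s]).get ⟨i, hi'⟩ = q.get ⟨i, hi⟩ := by
        simp [List.get_eq_getElem, List.getElem_append_left hi]
      obtain ⟨j, hj, hji, hjD⟩ := h i hi' (by rw [hg]; exact hget)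
      have hjq : j < q.length := lt_trans hji hi
      refine ⟨j, by omega, hji, ?_⟩
      have : (q ++ [s]).get ⟨j, hj⟩ = q.get ⟨j, by omega⟩ := by
        simp [List.get_eq_getElem, List.getElem_append_left (show j < q.length by omega)]
      rw [← this]; exact hjD
    · have hi' : q.length < (q ++ [s]).length := by simp
      have hg : (q ++ [s]).get ⟨q.length, hi'⟩ = s := by simp [List.get_eq_getElem]
      obtain ⟨j, hj, hji, hjD⟩ := h q.length hi' (by rw [hg, hs])
      rw [mem_iff_get]
      refine ⟨j, hji, ?_⟩
      have : (q ++ [s]).get ⟨j, hj⟩ = q.get ⟨j, hji⟩ := by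
        simp [List.get_eq_getElem, List.getElem_append_left hji]
      rw [← this]; exact hjD
  · rintro ⟨h1, h2⟩ i hi hget
    rcases lt_or_ge i q.length with hk | hk
    · have hg : (q ++ [s]).get ⟨i, hi⟩ = q.get ⟨i, hk⟩ := by
        simp [List.get_eq_getElem, List.getElem_append_left hk]
      obtain ⟨j, hj, hji, hjD⟩ := h1 i hk (hg ▸ hget)
      refine ⟨j, by simp; omega, hji, ?_⟩
      have : (q ++ [s]).get ⟨j, by simp; omega⟩ = q.get ⟨j, hj⟩ := by
        simp [List.get_eq_getElem, List.getElem_append_left hj]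
      rw [this]; exact hjD
    · have hil : i = q.length := by simp at hi; omega
      subst hil
      have hg : (q ++ [s]).get ⟨q.length, hi⟩ = s := by simp [List.get_eq_getElem]
      obtain ⟨j, hj, hjD⟩ := (mem_iff_get _ _).1 (h2 (by rw [← hg, hget]))
      refine ⟨j, by simp; omega, hj, ?_⟩
      have : (q ++ [s]).get ⟨j, by simp; omega⟩ = q.get ⟨j, hj⟩ := by
        simp [List.get_eq_getElem, List.getElem_append_left hj]
      rw [this]; exact hjD

lemma ballot_append_iff (q : List BStep) (s : BStep) :
    Ballotlike (q ++ [s]) ↔ Ballotlike q ∧ 0 ≤ hsum q + s.h ∧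
      (s = BStep.Hu → 0 < hsum q) ∧ (s = BStep.Hd → BStep.D ∈ q) := by
  unfold Ballotlike
  rw [nonneg_append_iff, res1_append_iff, res2_append_iff]
  tauto

lemma hsum_le_length (p : List BStep) : hsum p ≤ p.length := by
  induction p with
  | nil => simp [hsum]
  | cons s q ih =>
    have : BStep.h s ≤ 1 := by cases s <;> simp [BStep.h]
    simp only [hsum, List.map_cons, List.sum_cons, List.length_cons] at *
    push_cast
    omega

instance : Fintype BStep :=
  ⟨{BStep.U, BStep.D, BStep.Hu, BStep.Hd}, by intro x; cases x <;> simp⟩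

instance finBallot (n : ℕ) (Q : List BStep → Prop) :
    Finite {p : List BStep // p.length = n ∧ Q p} := by
  have h : {p : List BStep | p.length = n ∧ Q p}.Finite :=
    (List.finite_length_eq (α := BStep) (n := n)).subset (fun p hp => hp.1)
  exact h.to_subtype

/-- card of subtype equality from pointwise iff -/
lemma card_iff {α : Type*} {P Q : α → Prop} (h : ∀ p, P p ↔ Q p) :
    Nat.card {p // P p} = Nat.card {p // Q p} :=
  Nat.card_congr (Equiv.subtypeEquivRight h)

lemma card_zero {α : Type*} {P : α → Prop} (h : ∀ p, ¬ P p) :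
    Nat.card {p // P p} = 0 := by
  have : IsEmpty {p // P p} := ⟨fun ⟨p, hp⟩ => h p hp⟩
  simp [Nat.card_of_isEmpty]

lemma natcard_sigma {ι : Type*} [Fintype ι] {f : ι → Type*} [∀ i, Finite (f i)] :
    Nat.card (Σ i, f i) = ∑ i, Nat.card (f i) := by
  classical
  letI : ∀ i, Fintype (f i) := fun i => Fintype.ofFinite _
  simp [Nat.card_eq_fintype_card]

/-- decompose by final step -/
def appendEquiv (n : ℕ) (P : List BStep → Prop) :
    {p : List BStep // p.length = n + 1 ∧ P p} ≃
      Σ s : BStep, {q : List BStep // q.length = n ∧ P (q ++ [s])} where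
  toFun := fun ⟨p, hl, hp⟩ =>
    have hne : p ≠ [] := by intro h; rw [h] at hl; simp at hl
    ⟨p.getLast hne, ⟨p.dropLast, by simp [List.length_dropLast, hl],
      by rwa [List.dropLast_append_getLast hne]⟩⟩
  invFun := fun ⟨s, q, hl, hq⟩ => ⟨q ++ [s], by simp [hl], hq⟩
  left_inv := by
    rintro ⟨p, hl, hp⟩
    simp only [Subtype.mk.injEq]
    exact List.dropLast_append_getLast _
  right_inv := by
    rintro ⟨s, q, hl, hq⟩
    exact Sigma.subtype_ext (List.getLast_append _) (by simp)

noncomputable def A (n : ℕ) (i : ℤ) (d : Bool) : ℕ :=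
  Nat.card {p : List BStep // p.length = n ∧ Ballotlike p ∧ hsum p = i ∧ (BStep.D ∈ p ↔ d = true)}

lemma ballot_nil : Ballotlike [] := by
  refine ⟨fun k => by simp [hsum], fun i hi => by simp at hi, fun i hi => by simp at hi⟩

lemma A_zero (i : ℤ) (d : Bool) : A 0 i d = if i = 0 ∧ d = false then 1 else 0 := by
  unfold A
  split
  · next h =>
    obtain ⟨hi, hd⟩ := h; subst hi hd
    rw [Nat.card_eq_one_iff_unique.2]
    constructor
    · constructor
      rintro ⟨p, hp, -⟩ ⟨q, hq, -⟩
      simp only [Subtype.mk.injEq]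
      rw [List.length_eq_zero_iff.1 hp, List.length_eq_zero_iff.1 hq]
    · exact ⟨⟨[], rfl, ballot_nil, by simp [hsum]⟩⟩
  · next h =>
    apply card_zero
    rintro p ⟨hl, hb, hs, hd⟩
    rw [List.length_eq_zero_iff.1 hl] at hs hd
    simp [hsum] at hs hd
    apply h
    constructor
    · omega
    · cases d
      · rfl
      · simp at hd

lemma bstep_sum (f : BStep → ℕ) :
    ∑ s : BStep, f s = f .U + f .D + f .Hu + f .Hd := by
  show ∑ s ∈ ({BStep.U, BStep.D, BStep.Hu, BStep.Hd} : Finset BStep), f s = _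
  rw [Finset.sum_insert (by decide), Finset.sum_insert (by decide),
    Finset.sum_insert (by decide), Finset.sum_singleton]
  abel

lemma card_split_len (n : ℕ) (P : List BStep → Prop) :
    Nat.card {q : List BStep // q.length = n ∧ P q} =
      Nat.card {q : List BStep // q.length = n ∧ (P q ∧ BStep.D ∈ q)} +
      Nat.card {q : List BStep // q.length = n ∧ (P q ∧ BStep.D ∉ q)} := by
  classical
  rw [← Nat.card_sum]
  apply Nat.card_congr
  exact {
    toFun := fun x => if h : BStep.D ∈ x.1 then Sum.inl ⟨x.1, x.2.1, x.2.2, h⟩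
      else Sum.inr ⟨x.1, x.2.1, x.2.2, h⟩
    invFun := fun y => y.elim (fun z => ⟨z.1, z.2.1, z.2.2.1⟩) (fun z => ⟨z.1, z.2.1, z.2.2.1⟩)
    left_inv := fun x => by by_cases h : BStep.D ∈ x.1 <;> simp [h]
    right_inv := fun y => by
      rcases y with z | z
      · simp [z.2.2.2]
      · simp [z.2.2.2] }

lemma A_neg (n : ℕ) (i : ℤ) (hi : i < 0) (d : Bool) : A n i d = 0 := by
  apply card_zero
  rintro p ⟨-, hb, hs, -⟩
  have := hsum_nonneg_of hb.1
  omega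

lemma A_succ (n : ℕ) (i : ℤ) (hi : 0 ≤ i) (d : Bool) :
    A (n+1) i d = A n (i-1) d + (if d then A n (i+1) true + A n (i+1) false else 0)
      + (if 1 ≤ i then A n i d else 0) + (if d then A n i true else 0) := by
  unfold A
  rw [Nat.card_congr (appendEquiv n _), natcard_sigma, bstep_sum]
  have hU : Nat.card {q : List BStep // q.length = n ∧ Ballotlike (q ++ [BStep.U]) ∧
      hsum (q ++ [BStep.U]) = i ∧ (BStep.D ∈ q ++ [BStep.U] ↔ d = true)} =
      Nat.card {p : List BStep // p.length = n ∧ Ballotlike p ∧ hsum p = i - 1 ∧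
        (BStep.D ∈ p ↔ d = true)} := by
    apply card_iff
    intro q
    rw [ballot_append_iff, hsum_append]
    simp only [BStep.h, List.mem_append, List.mem_singleton]
    constructor
    · rintro ⟨hl, ⟨hb, -, -, -⟩, hs, hd⟩
      refine ⟨hl, hb, by omega, ?_⟩
      simpa using hd
    · rintro ⟨hl, hb, hs, hd⟩
      have := hsum_nonneg_of hb.1
      refine ⟨hl, ⟨hb, by omega, by simp, by simp⟩, by omega, by simpa using hd⟩
  have hD : Nat.card {q : List BStep // q.length = n ∧ Ballotlike (q ++ [BStep.D]) ∧
      hsum (q ++ [BStep.D]) = i ∧ (BStep.D ∈ q ++ [BStep.D] ↔ d = true)} =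
      (if d then A n (i+1) true + A n (i+1) false else 0) := by
    cases d with
    | false =>
      rw [if_neg (by decide)]
      apply card_zero
      rintro q ⟨-, -, -, hd⟩
      simp at hd
    | true =>
      rw [if_pos rfl]
      have e1 : Nat.card {q : List BStep // q.length = n ∧ Ballotlike (q ++ [BStep.D]) ∧
          hsum (q ++ [BStep.D]) = i ∧ (BStep.D ∈ q ++ [BStep.D] ↔ true = true)} =
          Nat.card {q : List BStep // q.length = n ∧ (Ballotlike q ∧ hsum q = i + 1)} := by
        apply card_iff
        intro q
        rw [ballot_append_iff, hsum_append]
        simp only [BStep.h]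
        constructor
        · rintro ⟨hl, ⟨hb, -, -, -⟩, hs, -⟩
          exact ⟨hl, hb, by omega⟩
        · rintro ⟨hl, hb, hs⟩
          refine ⟨hl, ⟨hb, by omega, by simp, by simp⟩, by omega, by simp⟩
      rw [e1, card_split_len n (fun q => Ballotlike q ∧ hsum q = i + 1)]
      unfold A
      congr 1
      · apply card_iff; intro q
        constructor
        · rintro ⟨h1, ⟨h2, h3⟩, h4⟩; exact ⟨h1, h2, h3, by simp [h4]⟩
        · rintro ⟨h1, h2, h3, h4⟩; simp at h4; exact ⟨h1, ⟨h2, h3⟩, h4⟩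
      · apply card_iff; intro q
        constructor
        · rintro ⟨h1, ⟨h2, h3⟩, h4⟩; exact ⟨h1, h2, h3, by simp [h4]⟩
        · rintro ⟨h1, h2, h3, h4⟩; simp at h4; exact ⟨h1, ⟨h2, h3⟩, h4⟩
  have hHu : Nat.card {q : List BStep // q.length = n ∧ Ballotlike (q ++ [BStep.Hu]) ∧
      hsum (q ++ [BStep.Hu]) = i ∧ (BStep.D ∈ q ++ [BStep.Hu] ↔ d = true)} =
      (if 1 ≤ i then A n i d else 0) := by
    by_cases h1 : 1 ≤ i
    · rw [if_pos h1]
      apply card_iff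
      intro q
      rw [ballot_append_iff, hsum_append]
      simp only [BStep.h, add_zero, List.mem_append, List.mem_singleton]
      constructor
      · rintro ⟨hl, ⟨hb, -, -, -⟩, hs, hd⟩
        exact ⟨hl, hb, hs, by simpa using hd⟩
      · rintro ⟨hl, hb, hs, hd⟩
        exact ⟨hl, ⟨hb, by omega, fun _ => by omega, by simp⟩, hs, by simpa using hd⟩
    · rw [if_neg h1]
      apply card_zero
      rintro q ⟨-, hb, hs, -⟩
      rw [ballot_append_iff] at hb
      rw [hsum_append] at hs
      have := hb.2.2.1 rfl
      simp [BStep.h] at hs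
      omega
  have hHd : Nat.card {q : List BStep // q.length = n ∧ Ballotlike (q ++ [BStep.Hd]) ∧
      hsum (q ++ [BStep.Hd]) = i ∧ (BStep.D ∈ q ++ [BStep.Hd] ↔ d = true)} =
      (if d then A n i true else 0) := by
    cases d with
    | true =>
      rw [if_pos rfl]
      apply card_iff
      intro q
      rw [ballot_append_iff, hsum_append]
      simp only [BStep.h, add_zero, List.mem_append, List.mem_singleton]
      constructor
      · rintro ⟨hl, ⟨hb, -, -, hD⟩, hs, -⟩
        exact ⟨hl, hb, hs, by simp [hD (by simp)]⟩
      · rintro ⟨hl, hb, hs, hd⟩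
        have hd' : BStep.D ∈ q := by simpa using hd
        refine ⟨hl, ⟨hb, by have := hsum_nonneg_of hb.1; omega, by simp, fun _ => hd'⟩, hs, ?_⟩
        simp [hd']
    | false =>
      rw [if_neg (by decide)]
      apply card_zero
      rintro q ⟨-, hb, -, hd⟩
      rw [ballot_append_iff] at hb
      have hD := hb.2.2.2 rfl
      simp at hd
      exact hd (by simp [hD])
  rw [hU, hD, hHu, hHd]
  rfl

lemma zchoose_neg_right (m j : ℤ) (h : j < 0) : zchoose m j = 0 := by
  unfold zchoose
  rw [if_neg]
  omega

lemma zchoose_nat (a b : ℕ) : zchoose (a : ℤ) (b : ℤ) = (Nat.choose a b : ℤ) := by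
  unfold zchoose
  rw [if_pos (by omega)]
  simp

lemma zchoose_pascal (m j : ℤ) (hm : 1 ≤ m) :
    zchoose m j = zchoose (m-1) (j-1) + zchoose (m-1) j := by
  rcases lt_or_ge j 0 with hj | hj
  · rw [zchoose_neg_right _ _ hj, zchoose_neg_right _ _ (by omega),
      zchoose_neg_right _ _ hj]
    ring
  obtain ⟨a, ha⟩ : ∃ a : ℕ, m = (a : ℤ) + 1 := ⟨(m-1).toNat, by omega⟩
  subst ha
  rcases eq_or_lt_of_le hj with hj0 | hj1
  · rw [← hj0]
    have h1 : zchoose ((a:ℤ)+1) 0 = 1 := by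
      unfold zchoose; rw [if_pos (by omega)]; simp
    have h2 : zchoose ((a:ℤ)+1-1) 0 = 1 := by
      unfold zchoose; rw [if_pos (by omega)]; simp
    rw [h1, zchoose_neg_right _ _ (by omega), h2]
    ring
  obtain ⟨b, hb⟩ : ∃ b : ℕ, j = (b : ℤ) + 1 := ⟨(j-1).toNat, by omega⟩
  subst hb
  have e1 : ((a:ℤ)+1-1) = (a:ℤ) := by ring
  have e2 : ((b:ℤ)+1-1) = (b:ℤ) := by ring
  rw [e1, e2]
  have c1 : zchoose ((a:ℤ)+1) ((b:ℤ)+1) = (Nat.choose (a+1) (b+1) : ℤ) := by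
    rw [show ((a:ℤ)+1) = ((a+1:ℕ):ℤ) by push_cast; ring,
       show ((b:ℤ)+1) = ((b+1:ℕ):ℤ) by push_cast; ring, zchoose_nat]
  have c2 : zchoose (a:ℤ) ((b:ℤ)+1) = (Nat.choose a (b+1) : ℤ) := by
    rw [show ((b:ℤ)+1) = ((b+1:ℕ):ℤ) by push_cast; ring, zchoose_nat]
  rw [c1, c2, zchoose_nat, Nat.choose_succ_succ]
  push_cast
  ring

lemma pas (M j M' j' : ℤ) (hM : 1 ≤ M) (h2 : M' = M - 1) (h3 : j' = j - 1) :
    zchoose M j = zchoose M' j' + zchoose M' j := by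
  subst h2 h3
  exact zchoose_pascal M j hM

lemma zchoose_symm (m j mj : ℤ) (h0 : 0 ≤ j) (h : j ≤ m) (hmj : mj = m - j) :
    zchoose m j = zchoose m mj := by
  subst hmj
  obtain ⟨a, ha⟩ : ∃ a : ℕ, m = (a:ℤ) := ⟨m.toNat, by omega⟩
  obtain ⟨b, hb⟩ : ∃ b : ℕ, j = (b:ℤ) := ⟨j.toNat, by omega⟩
  subst ha hb
  have hba : b ≤ a := by omega
  rw [show ((a:ℤ) - (b:ℤ)) = ((a - b : ℕ) : ℤ) by omega, zchoose_nat, zchoose_nat,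
    Nat.choose_symm hba]

def Ef (m i : ℤ) : ℤ := zchoose (m-1) (i-1)

def Ff (m i : ℤ) : ℤ :=
  zchoose (2*m-2) (m-1-i) - zchoose (2*m-2) (m-2-i) + zchoose (m-2) (i-2) - zchoose (m-1) (i-1)

lemma Ef_step (m i : ℤ) (hm : 1 ≤ m) (hi : 1 ≤ i) :
    Ef (m+1) i = Ef m (i-1) + Ef m i := by
  unfold Ef
  rw [show (m+1-1 : ℤ) = m by ring]
  have P := pas m (i-1) (m-1) (i-2) hm (by ring) (by ring)
  rw [show (i-1-1 : ℤ) = i-2 by ring]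
  linarith [P]

lemma Ef_step0 (m : ℤ) : Ef (m+1) 0 = 0 := by
  unfold Ef
  exact zchoose_neg_right _ _ (by omega)

lemma Ff_step (m i : ℤ) (hm : 2 ≤ m) (hi : 1 ≤ i) :
    Ff (m+1) i = Ff m (i-1) + (Ff m (i+1) + Ef m (i+1)) + Ff m i + Ff m i := by
  unfold Ff Ef
  rw [show (2*(m+1)-2 : ℤ) = 2*m by ring,
      show (m+1-1-i : ℤ) = m-i by ring,
      show (m+1-2-i : ℤ) = m-1-i by ring,
      show (m+1-2 : ℤ) = m-1 by ring,
      show (m+1-1 : ℤ) = m by ring,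
      show (m-1-(i-1) : ℤ) = m-i by ring,
      show (m-2-(i-1) : ℤ) = m-1-i by ring,
      show (i-1-2 : ℤ) = i-3 by ring,
      show (i-1-1 : ℤ) = i-2 by ring,
      show (m-1-(i+1) : ℤ) = m-2-i by ring,
      show (m-2-(i+1) : ℤ) = m-3-i by ring,
      show (i+1-2 : ℤ) = i-1 by ring,
      show (i+1-1 : ℤ) = i by ring]
  have P1 := pas (2*m) (m-i) (2*m-1) (m-1-i) (by omega) (by ring) (by ring)
  have P2 := pas (2*m) (m-1-i) (2*m-1) (m-2-i) (by omega) (by ring) (by ring)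
  have P3 := pas (2*m-1) (m-i) (2*m-2) (m-1-i) (by omega) (by ring) (by ring)
  have P5 := pas (2*m-1) (m-2-i) (2*m-2) (m-3-i) (by omega) (by ring) (by ring)
  have P7 := pas m (i-1) (m-1) (i-2) (by omega) (by ring) (by ring)
  have P8 := pas (m-1) (i-2) (m-2) (i-3) (by omega) (by ring) (by ring)
  have P9 := pas (m-1) (i-1) (m-2) (i-2) (by omega) (by ring) (by ring)
  linear_combination P1 - P2 + P3 - P5 - P7 + P8 + P9

lemma Ff_step0 (m : ℤ) (hm : 2 ≤ m) :
    Ff (m+1) 0 = (Ff m 1 + Ef m 1) + Ff m 0 := by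
  unfold Ff Ef
  rw [show (2*(m+1)-2 : ℤ) = 2*m by ring,
      show (m+1-1-0 : ℤ) = m by ring,
      show (m+1-2-0 : ℤ) = m-1 by ring,
      show (m+1-2 : ℤ) = m-1 by ring,
      show (m+1-1 : ℤ) = m by ring,
      show (m-1-1 : ℤ) = m-2 by ring,
      show (m-2-1 : ℤ) = m-3 by ring,
      show ((1:ℤ)-2) = -1 by ring,
      show ((1:ℤ)-1) = 0 by ring,
      show (m-1-0 : ℤ) = m-1 by ring,
      show (m-2-0 : ℤ) = m-2 by ring,
      show ((0:ℤ)-2) = -2 by ring,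
      show ((0:ℤ)-1) = -1 by ring]
  have Q1 := pas (2*m) m (2*m-1) (m-1) (by omega) (by ring) (by ring)
  have Q2 := pas (2*m) (m-1) (2*m-1) (m-2) (by omega) (by ring) (by ring)
  have Q3 := pas (2*m-1) m (2*m-2) (m-1) (by omega) (by ring) (by ring)
  have Q4 := pas (2*m-1) (m-2) (2*m-2) (m-3) (by omega) (by ring) (by ring)
  have S := zchoose_symm (2*m-2) m (m-2) (by omega) (by omega) (by ring)
  have Z1 := zchoose_neg_right (m-1) (-2) (by omega)
  have Z2 := zchoose_neg_right m (-1) (by omega)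
  have Z3 := zchoose_neg_right (m-2) (-1) (by omega)
  have Z4 := zchoose_neg_right (m-2) (-2) (by omega)
  have Z5 := zchoose_neg_right (m-1) (-1) (by omega)
  linear_combination Q1 - Q2 + Q3 - Q4 + S + Z1 - Z2 - Z3 - Z4 + Z5

lemma zchoose_big (m j : ℤ) (h0 : 0 ≤ m) (h : m < j) : zchoose m j = 0 := by
  unfold zchoose
  rw [if_pos (by omega)]
  rw [Nat.choose_eq_zero_of_lt (by omega)]
  simp

lemma A1_false (i : ℤ) (hi : 0 ≤ i) : A 1 i false = if i = 1 then 1 else 0 := by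
  have h := A_succ 0 i hi false
  simp only [A_zero, Bool.false_eq_true, Bool.true_eq_false, if_false, and_false, and_true,
    eq_self_iff_true, if_true] at h
  rw [h]
  split_ifs <;> omega

lemma A1_true (i : ℤ) (hi : 0 ≤ i) : A 1 i true = 0 := by
  have h := A_succ 0 i hi true
  simp only [A_zero, Bool.false_eq_true, Bool.true_eq_false, if_false, and_false, and_true,
    eq_self_iff_true, if_true] at h
  rw [h]
  split_ifs <;> omega

lemma A2_true (i : ℤ) (hi : 0 ≤ i) : A 2 i true = if i = 0 then 1 else 0 := by
  have h := A_succ 1 i hi true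
  simp only [Bool.true_eq_false, eq_self_iff_true, if_true] at h
  have e1 : A 1 (i-1) true = 0 := by
    rcases lt_or_ge (i-1) 0 with hc | hc
    · exact A_neg _ _ hc _
    · exact A1_true _ hc
  rw [e1, A1_true _ (by omega), A1_true _ hi, A1_false _ (by omega)] at h
  rw [h]
  split_ifs <;> omega

lemma A_false_eq (n : ℕ) (hn : 1 ≤ n) (i : ℤ) (hi : 0 ≤ i) :
    (A n i false : ℤ) = Ef (n : ℤ) i := by
  induction n, hn using Nat.le_induction generalizing i with
  | base =>
    rw [A1_false i hi]
    unfold Ef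
    obtain h0 | h1 | h2 : i = 0 ∨ i = 1 ∨ 2 ≤ i := by omega
    · subst h0; norm_num [zchoose]
    · subst h1; norm_num [zchoose]
    · rw [if_neg (by omega)]
      rw [show ((1:ℕ):ℤ) - 1 = 0 by norm_num, zchoose_big 0 (i-1) le_rfl (by omega)]
      norm_num
  | succ n hn ih =>
    have h := A_succ n i hi false
    simp only [Bool.false_eq_true, if_false] at h
    rcases eq_or_lt_of_le hi with h0 | h1
    · rw [← h0] at h ⊢
      rw [show ((0:ℤ) - 1) = -1 by ring, A_neg n (-1) (by omega) false, if_neg (by omega)] at h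
      rw [h]
      have : Ef ((n:ℤ)+1) 0 = 0 := Ef_step0 (n:ℤ)
      push_cast
      rw [this]
      try norm_num
    · rw [if_pos (by omega)] at h
      push_cast [h]
      rw [ih (i-1) (by omega), ih i hi]
      have := Ef_step (n:ℤ) i (by exact_mod_cast hn) (by omega)
      push_cast
      rw [this]
      ring

lemma A_true_eq (n : ℕ) (hn : 2 ≤ n) (i : ℤ) (hi : 0 ≤ i) :
    (A n i true : ℤ) = Ff (n : ℤ) i := by
  induction n, hn using Nat.le_induction generalizing i with
  | base =>
    rw [A2_true i hi]
    unfold Ff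
    obtain h0 | h1 | h2 | h3 : i = 0 ∨ i = 1 ∨ i = 2 ∨ 3 ≤ i := by omega
    · subst h0; norm_num [zchoose]
    · subst h1; norm_num [zchoose]
    · subst h2; norm_num [zchoose]
    · rw [if_neg (by omega)]
      push_cast
      rw [zchoose_neg_right 2 (1-i) (by omega),
        zchoose_neg_right 2 (0-i) (by omega),
        zchoose_big 0 (i-2) (by omega) (by omega),
        zchoose_big 1 (i-1) (by omega) (by omega)]
      try norm_num
  | succ n hn ih =>
    have h := A_succ n i hi true
    simp only [eq_self_iff_true, if_true] at h
    rcases eq_or_lt_of_le hi with h0 | h1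
    · rw [← h0] at h ⊢
      rw [show ((0:ℤ) - 1) = -1 by ring, A_neg n (-1) (by omega) true, if_neg (by omega)] at h
      push_cast [h]
      rw [ih 1 (by omega), ih 0 le_rfl, A_false_eq n (by omega) 1 (by omega)]
      have := Ff_step0 (n:ℤ) (by exact_mod_cast hn)
      push_cast
      rw [this]
      try push_cast
      try ring
    · rw [if_pos (by omega)] at h
      push_cast [h]
      rw [ih (i-1) (by omega), ih (i+1) (by omega), ih i hi,
        A_false_eq n (by omega) (i+1) (by omega)]
      have := Ff_step (n:ℤ) i (by exact_mod_cast hn) (by omega)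
      push_cast
      rw [this]
      try ring

lemma card_total (n : ℕ) (d : Bool) :
    Nat.card {p : List BStep // p.length = n ∧ Ballotlike p ∧ (BStep.D ∈ p ↔ d = true)} =
      ∑ i ∈ Finset.range (n+1), A n (i : ℤ) d := by
  have e : {p : List BStep // p.length = n ∧ Ballotlike p ∧ (BStep.D ∈ p ↔ d = true)} ≃
      Σ i : Fin (n+1), {p : List BStep // p.length = n ∧ Ballotlike p ∧
        hsum p = ((i : ℕ) : ℤ) ∧ (BStep.D ∈ p ↔ d = true)} := {
    toFun := fun ⟨p, hl, hb, hd⟩ =>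
      ⟨⟨(hsum p).toNat, by
          have h1 := hsum_nonneg_of hb.1
          have h2 := hsum_le_length p
          rw [hl] at h2
          omega⟩,
        ⟨p, hl, hb, by
          have h1 := hsum_nonneg_of hb.1
          simp [Int.toNat_of_nonneg h1], hd⟩⟩
    invFun := fun ⟨_, p, hl, hb, _, hd⟩ => ⟨p, hl, hb, hd⟩
    left_inv := fun ⟨p, hl, hb, hd⟩ => rfl
    right_inv := fun ⟨⟨i, hi⟩, p, hl, hb, hs, hd⟩ => by
      refine Sigma.subtype_ext ?_ rfl
      apply Fin.ext
      show (hsum p).toNat = i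
      have hs' : hsum p = (i : ℤ) := hs
      omega }
  rw [Nat.card_congr e, natcard_sigma]
  exact Fin.sum_univ_eq_sum_range (fun i => A n (i : ℤ) d) (n+1)

lemma sum_Ef (n : ℕ) (hn : 1 ≤ n) :
    ∑ i ∈ Finset.range (n+1), Ef (n : ℤ) (i : ℤ) = (2:ℤ)^(n-1) := by
  obtain ⟨m, rfl⟩ : ∃ m, n = m + 1 := ⟨n-1, by omega⟩
  rw [Finset.sum_range_succ']
  have h0 : Ef ((m+1 : ℕ) : ℤ) ((0:ℕ) : ℤ) = 0 := by
    unfold Ef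
    exact zchoose_neg_right _ _ (by omega)
  have ht : ∀ i ∈ Finset.range (m+1), Ef ((m+1 : ℕ) : ℤ) ((i+1 : ℕ) : ℤ) =
      (Nat.choose m i : ℤ) := by
    intro i _
    unfold Ef
    rw [show ((m+1:ℕ):ℤ) - 1 = (m:ℤ) by push_cast; ring,
      show ((i+1:ℕ):ℤ) - 1 = (i:ℤ) by push_cast; ring, zchoose_nat]
  rw [Finset.sum_congr rfl ht, h0, add_zero, ← Nat.cast_sum, Nat.sum_range_choose]
  push_cast
  norm_num

lemma sum_Ff (n : ℕ) (hn : 2 ≤ n) :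
    ∑ i ∈ Finset.range (n+1), Ff (n : ℤ) (i : ℤ) =
      (Nat.choose (2*n-2) (n-1) : ℤ) - 2^(n-2) := by
  set f : ℕ → ℤ := fun i => zchoose (2*(n:ℤ)-2) ((n:ℤ)-1-(i:ℤ)) with hf
  set g : ℕ → ℤ := fun i => zchoose ((n:ℤ)-2) ((i:ℤ)-2) with hg
  set h : ℕ → ℤ := fun i => zchoose ((n:ℤ)-1) ((i:ℤ)-1) with hh
  have hsplit : ∀ i ∈ Finset.range (n+1), Ff (n:ℤ) (i:ℤ) = (f i - f (i+1)) + (g i - h i) := by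
    intro i _
    unfold Ff
    simp only [hf, hg, hh]
    rw [show ((n:ℤ)-1-((i+1:ℕ):ℤ)) = (n:ℤ)-2-(i:ℤ) by push_cast; ring]
    ring
  rw [Finset.sum_congr rfl hsplit, Finset.sum_add_distrib, Finset.sum_range_sub' f (n+1),
    Finset.sum_sub_distrib]
  have hf0 : f 0 = (Nat.choose (2*n-2) (n-1) : ℤ) := by
    simp only [hf]
    rw [show (2*(n:ℤ)-2) = ((2*n-2 : ℕ) : ℤ) by omega,
      show ((n:ℤ)-1-((0:ℕ):ℤ)) = ((n-1 : ℕ) : ℤ) by omega, zchoose_nat]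
  have hfn : f (n+1) = 0 := by
    simp only [hf]
    exact zchoose_neg_right _ _ (by omega)
  -- sum of g
  obtain ⟨k, rfl⟩ : ∃ k, n = k + 2 := ⟨n-2, by omega⟩
  have hgsum : ∑ i ∈ Finset.range (k+2+1), g i = 2^k := by
    rw [Finset.sum_range_succ', Finset.sum_range_succ']
    have hg0 : g 0 = 0 := zchoose_neg_right _ _ (by omega)
    have hg1 : g 1 = 0 := zchoose_neg_right _ _ (by omega)
    have hgt : ∀ i ∈ Finset.range (k+1), g (i+1+1) = (Nat.choose k i : ℤ) := by
      intro i _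
      simp only [hg]
      rw [show (((k+2:ℕ):ℤ)-2) = (k:ℤ) by push_cast; ring,
        show (((i+1+1:ℕ)):ℤ)-2 = (i:ℤ) by push_cast; ring, zchoose_nat]
    rw [Finset.sum_congr rfl hgt, hg0, hg1, ← Nat.cast_sum, Nat.sum_range_choose]
    norm_num
  have hhsum : ∑ i ∈ Finset.range (k+2+1), h i = 2^(k+1) := by
    rw [Finset.sum_range_succ']
    have hh0 : h 0 = 0 := zchoose_neg_right _ _ (by omega)
    have hht : ∀ i ∈ Finset.range (k+2), h (i+1) = (Nat.choose (k+1) i : ℤ) := by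
      intro i _
      simp only [hh]
      rw [show (((k+2:ℕ):ℤ)-1) = ((k+1:ℕ):ℤ) by push_cast; ring,
        show (((i+1:ℕ)):ℤ)-1 = (i:ℤ) by push_cast; ring, zchoose_nat]
    rw [Finset.sum_congr rfl hht, hh0, ← Nat.cast_sum, Nat.sum_range_choose]
    norm_num
  rw [hf0, hfn, hgsum, hhsum]
  have e1 : (k+2) - 1 = k + 1 := by omega
  have e2 : (k+2) - 2 = k := by omega
  rw [e1, e2]
  ring

theorem ballotlike_total_counts (n : ℕ) (hn : 2 ≤ n) :
    Nat.card {p : List BStep // p.length = n ∧ Ballotlike p ∧ BStep.D ∉ p} = 2 ^ (n - 1) ∧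
    (Nat.card {p : List BStep // p.length = n ∧ Ballotlike p ∧ BStep.D ∈ p} : ℤ) =
      Nat.choose (2 * n - 2) (n - 1) - 2 ^ (n - 2) := by
  constructor
  · have h1 : Nat.card {p : List BStep // p.length = n ∧ Ballotlike p ∧ BStep.D ∉ p} =
        ∑ i ∈ Finset.range (n+1), A n (i : ℤ) false := by
      rw [← card_total n false]
      apply card_iff
      intro p
      constructor
      · rintro ⟨a, b, c⟩; exact ⟨a, b, by simp [c]⟩
      · rintro ⟨a, b, c⟩; exact ⟨a, b, by simpa using c⟩
    rw [h1]
    have h2 : ∀ i ∈ Finset.range (n+1), ((A n (i : ℤ) false : ℕ) : ℤ) = Ef (n : ℤ) (i : ℤ) :=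
      fun i _ => A_false_eq n (by omega) (i : ℤ) (Int.natCast_nonneg i)
    have h4 : ((∑ i ∈ Finset.range (n+1), A n (i : ℤ) false : ℕ) : ℤ) = (2:ℤ)^(n-1) := by
      rw [Nat.cast_sum]
      exact (Finset.sum_congr rfl h2).trans (sum_Ef n (by omega))
    have h3 : ((2^(n-1) : ℕ) : ℤ) = (2:ℤ)^(n-1) := by push_cast; ring
    exact_mod_cast h4.trans h3.symm
  · have h1 : Nat.card {p : List BStep // p.length = n ∧ Ballotlike p ∧ BStep.D ∈ p} =
        ∑ i ∈ Finset.range (n+1), A n (i : ℤ) true := by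
      rw [← card_total n true]
      apply card_iff
      intro p
      constructor
      · rintro ⟨a, b, c⟩; exact ⟨a, b, by simp [c]⟩
      · rintro ⟨a, b, c⟩; exact ⟨a, b, by simpa using c⟩
    rw [h1]
    have h2 : ∀ i ∈ Finset.range (n+1), ((A n (i : ℤ) true : ℕ) : ℤ) = Ff (n : ℤ) (i : ℤ) :=
      fun i _ => A_true_eq n hn (i : ℤ) (Int.natCast_nonneg i)
    rw [Nat.cast_sum]
    exact (Finset.sum_congr rfl h2).trans (sum_Ff n hn)
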